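/- For all real σ with 1 < σ ≤ 1.01 and all real t ≥ 1, the values Σ_k(σ,t) for k = 1, 2, ..., 16 are bounded above, respectively, by: 0.10919579, 0.03040152, 0.00958566, 0.00384196, 0.00185609, 0.00102853, 0.00063099, 0.00041809, 0.00029396, 0.00021655, 0.00016557, 0.00013046, 0.00010535, 0.00008684, 0.00007282, 0.00006196. -/

import Mathlib

/-- `κ = 1/√5`. -/
noncomputable def κ : ℝ := 1 / Real.sqrt 5

/-- `σ₁(σ) = (1 + √(1 + 4σ²))/2`. -/
noncomputable def σ₁ (σ : ℝ) : ℝ := (1 + Real.sqrt (1 + 4 * σ ^ 2)) / 2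

/-- `Σ_k(σ,t)`. -/
noncomputable def Sigk (k : ℕ) (σ t : ℝ) : ℝ :=
  σ / (σ ^ 2 + k ^ 2 * t ^ 2) + (σ - 1) / ((σ - 1) ^ 2 + k ^ 2 * t ^ 2) -
    κ * σ₁ σ / ((σ₁ σ) ^ 2 + k ^ 2 * t ^ 2) -
    κ * (σ₁ σ - 1) / ((σ₁ σ - 1) ^ 2 + k ^ 2 * t ^ 2)

/-- Admissible values `𝓑_{0.01}(k)` for `k = 1, …, 16` (Table 2). -/
noncomputable def B001 : ℕ → ℝ
  | 1 => 0.10919579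
  | 2 => 0.03040152
  | 3 => 0.00958566
  | 4 => 0.00384196
  | 5 => 0.00185609
  | 6 => 0.00102853
  | 7 => 0.00063099
  | 8 => 0.00041809
  | 9 => 0.00029396
  | 10 => 0.00021655
  | 11 => 0.00016557
  | 12 => 0.00013046
  | 13 => 0.00010535
  | 14 => 0.00008684
  | 15 => 0.00007282
  | 16 => 0.00006196
  | _ => 0

/-!
Pairing each pole with its shift by one, `x/(x²+D) + (x-1)/((x-1)²+D) = (2x-1)·K(x²-x, D)` with
`K(a, D) = (a+D)/((a+D)²+D)`, and using `σ₁² - σ₁ = σ²`, turns `Σ_k(σ,t)` into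
`(2σ-1)·K(σ²-σ, D) - ρ(σ)·K(σ², D)` with `D = k²t²` and `ρ(σ) = κ(2σ₁-1) = √((1+4σ²)/5)`.
For `D ≥ 1` this is nondecreasing in `σ ∈ [1, 1.01]`: the coefficient `2σ-1` grows at rate 2, which
outweighs both the decrease of `K(σ²-σ, D)` and the growth of `ρ(σ)`. At `σ = 1.01` it
is nonincreasing in `D ≥ 1`, since `ρ(1.01) ≤ 1.02` and `K(1.0201, ·)` decreases more slowly than
`K(0.0101, ·)`. So `Σ_k(σ,t)` is at most its value at `σ = 1.01`, `t = 1`, which is evaluated with a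
rational lower bound for `ρ(1.01)`.
-/

open Set

noncomputable def pairKernel (a D : ℝ) : ℝ := (a + D) / ((a + D) ^ 2 + D)

section pairKernel

variable {a b D D' : ℝ}

theorem div_add_div_sub_one_eq_pairKernel (x : ℝ) (hD : 0 < D) :
    x / (x ^ 2 + D) + (x - 1) / ((x - 1) ^ 2 + D) = (2 * x - 1) * pairKernel (x ^ 2 - x) D := by
  have h₁ : 0 < x ^ 2 + D := by positivity
  have h₂ : 0 < (x - 1) ^ 2 + D := by positivity
  have h₃ : 0 < (x ^ 2 - x + D) ^ 2 + D := by positivity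
  unfold pairKernel
  field_simp
  ring

theorem pairKernel_nonneg (ha : 0 ≤ a) (hD : 0 ≤ D) : 0 ≤ pairKernel a D := by
  unfold pairKernel; positivity

theorem pairKernel_sub_pairKernel (hD : 0 < D) :
    pairKernel a D - pairKernel b D =
      (b - a) * ((a + D) * (b + D) - D) / (((a + D) ^ 2 + D) * ((b + D) ^ 2 + D)) := by
  have ha : 0 < (a + D) ^ 2 + D := by positivity
  have hb : 0 < (b + D) ^ 2 + D := by positivity
  unfold pairKernel
  field_simp
  ring

theorem pairKernel_antitone (ha : 0 ≤ a) (hab : a ≤ b) (hD : 1 ≤ D) :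
    pairKernel b D ≤ pairKernel a D := by
  have hprod : D ≤ (a + D) * (b + D) := by nlinarith
  rw [← sub_nonneg, pairKernel_sub_pairKernel (by linarith)]
  exact div_nonneg (mul_nonneg (by linarith) (by linarith)) (by positivity)

theorem pairKernel_sub_pairKernel_le (ha : 0 ≤ a) (hab : a ≤ b) (hD : 0 < D) :
    pairKernel a D - pairKernel b D ≤ (b - a) / D * pairKernel b D := by
  have hq : 0 < (b + D) ^ 2 + D := by positivity
  have hb : 0 ≤ b := ha.trans hab
  have hba : 0 ≤ b - a := by linarith
  have key : ((a + D) * (b + D) - D) * D ≤ (b + D) * ((a + D) ^ 2 + D) := by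
    nlinarith [mul_le_mul_of_nonneg_left (le_add_of_nonneg_left ha : D ≤ a + D)
      (by positivity : 0 ≤ (a + D) * (b + D))]
  rw [pairKernel_sub_pairKernel hD, pairKernel, div_mul_div_comm,
    div_le_div_iff₀ (by positivity) (by positivity)]
  nlinarith [mul_le_mul_of_nonneg_left key (mul_nonneg hba hq.le)]

theorem pairKernel_zero_le (hb : 0 ≤ b) (hD : 0 < D) :
    pairKernel 0 D ≤ (1 + b / D) * pairKernel b D := by
  unfold pairKernel
  rw [zero_add, one_add_div hD.ne', div_mul_div_comm,
    div_le_div_iff₀ (by positivity) (by positivity)]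
  have hsq : D ^ 2 ≤ (b + D) ^ 2 := by nlinarith
  nlinarith [mul_le_mul_of_nonneg_left hsq hD.le]

theorem pairKernel_sub_pairKernel_right (hD : 0 < D) (hD' : 0 < D') :
    pairKernel a D - pairKernel a D' =
      (D' - D) * ((a + D) * (a + D') + a) / (((a + D) ^ 2 + D) * ((a + D') ^ 2 + D')) := by
  have h : 0 < (a + D) ^ 2 + D := by positivity
  have h' : 0 < (a + D') ^ 2 + D' := by positivity
  unfold pairKernel
  field_simp
  ring

theorem pairKernel_antitone_right (ha : 0 ≤ a) (hD : 0 < D) (hDD' : D ≤ D') :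
    pairKernel a D' ≤ pairKernel a D := by
  have hD' : 0 < D' := hD.trans_le hDD'
  rw [← sub_nonneg, pairKernel_sub_pairKernel_right hD hD']
  exact div_nonneg (mul_nonneg (by linarith) (by positivity)) (by positivity)

theorem pairKernel_sub_le_sub (hD : 1 ≤ D) (hDD' : D ≤ D') :
    pairKernel 1.0201 D - pairKernel 1.0201 D' ≤ pairKernel 0.0101 D - pairKernel 0.0101 D' := by
  have hD₀ : 0 < D := by linarith
  have hD'₀ : 0 < D' := by linarith
  rw [pairKernel_sub_pairKernel_right hD₀ hD'₀, pairKernel_sub_pairKernel_right hD₀ hD'₀,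
    mul_div_assoc, mul_div_assoc]
  refine mul_le_mul_of_nonneg_left ?_ (by linarith)
  rw [div_le_div_iff₀ (by positivity) (by positivity)]
  -- in `x = D - 1`, `y = D' - 1` the difference is a polynomial with nonnegative coefficients
  obtain ⟨x, hx, rfl⟩ : ∃ x, 0 ≤ x ∧ D = 1 + x := ⟨D - 1, by linarith, by ring⟩
  obtain ⟨y, hy, rfl⟩ : ∃ y, 0 ≤ y ∧ D' = 1 + y := ⟨D' - 1, by linarith, by ring⟩
  rw [← sub_nonneg]
  ring_nf
  positivity

end pairKernel

noncomputable def rho (σ : ℝ) : ℝ := κ * (2 * σ₁ σ - 1)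

section rho

variable {σ τ : ℝ}

theorem σ₁_sq_sub_σ₁ (σ : ℝ) : σ₁ σ ^ 2 - σ₁ σ = σ ^ 2 := by
  have h : √(1 + 4 * σ ^ 2) ^ 2 = 1 + 4 * σ ^ 2 := Real.sq_sqrt (by positivity)
  unfold σ₁
  linear_combination h / 4

theorem rho_eq_sqrt (σ : ℝ) : rho σ = √((1 + 4 * σ ^ 2) / 5) := by
  rw [Real.sqrt_div' _ (by norm_num), rho, κ, σ₁]
  ring

theorem rho_sq (σ : ℝ) : rho σ ^ 2 = (1 + 4 * σ ^ 2) / 5 := by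
  rw [rho_eq_sqrt, Real.sq_sqrt (by positivity)]

theorem one_le_rho (hσ : 1 ≤ σ) : 1 ≤ rho σ := by
  rw [rho_eq_sqrt, Real.le_sqrt zero_le_one (by positivity)]
  nlinarith

theorem rho_le_two_mul_sub_one (hσ : 1 ≤ σ) : rho σ ≤ 2 * σ - 1 := by
  rw [rho_eq_sqrt, Real.sqrt_le_left (by linarith)]
  nlinarith

theorem rho_le_add (hσ : 1 ≤ σ) (hστ : σ ≤ τ) : rho τ ≤ rho σ + 4 / 5 * τ * (τ - σ) := by
  have hσ' := one_le_rho hσ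
  have hτ' := one_le_rho (hσ.trans hστ)
  have h : (rho τ - rho σ) * (rho τ + rho σ) = 4 / 5 * (τ - σ) * (τ + σ) := by
    linear_combination rho_sq τ - rho_sq σ
  have hmono : rho σ ≤ rho τ := by
    rw [rho_eq_sqrt, rho_eq_sqrt]
    gcongr
  nlinarith [mul_le_mul_of_nonneg_left (by linarith : 2 ≤ rho τ + rho σ) (sub_nonneg.2 hmono)]

end rho

noncomputable def Sig (σ D : ℝ) : ℝ :=
  (2 * σ - 1) * pairKernel (σ ^ 2 - σ) D - rho σ * pairKernel (σ ^ 2) D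

theorem Sigk_eq_Sig (k : ℕ) (σ t : ℝ) (hD : 0 < (k : ℝ) ^ 2 * t ^ 2) :
    Sigk k σ t = Sig σ ((k : ℝ) ^ 2 * t ^ 2) := by
  have hσ := div_add_div_sub_one_eq_pairKernel σ hD
  have hσ₁ := div_add_div_sub_one_eq_pairKernel (σ₁ σ) hD
  rw [σ₁_sq_sub_σ₁] at hσ₁
  rw [Sig, rho, mul_assoc, ← hσ, ← hσ₁, Sigk]
  ring

theorem Sig_monotoneOn {D : ℝ} (hD : 1 ≤ D) : MonotoneOn (fun σ => Sig σ D) (Icc 1 1.01) := by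
  rintro σ ⟨hσ, -⟩ τ ⟨-, hτ⟩ hστ
  simp only [Sig]
  have hD₀ : 0 < D := by linarith
  have hδ : 0 ≤ τ - σ := sub_nonneg.2 hστ
  have hu : 0 ≤ σ ^ 2 - σ := by nlinarith
  have hcu : τ ^ 2 - τ - (σ ^ 2 - σ) = (τ - σ) * (τ + σ - 1) := by ring
  have huc : σ ^ 2 - σ ≤ τ ^ 2 - τ := by nlinarith
  have hc : τ ^ 2 - τ ≤ 0.0101 := by nlinarith
  set kc := pairKernel (τ ^ 2 - τ) D
  have hkc : 0 ≤ kc := pairKernel_nonneg (hu.trans huc) hD₀.le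
  have hKv : pairKernel (σ ^ 2) D ≤ (1 + (τ ^ 2 - τ) / D) * kc :=
    (pairKernel_antitone le_rfl (by positivity) hD).trans (pairKernel_zero_le (hu.trans huc) hD₀)
  have hsecond : rho τ * pairKernel (τ ^ 2) D - rho σ * pairKernel (σ ^ 2) D ≤
      4 / 5 * τ * (τ - σ) * ((1 + (τ ^ 2 - τ) / D) * kc) := by
    have hKb := pairKernel_antitone (by positivity) (by nlinarith : σ ^ 2 ≤ τ ^ 2) hD
    have hρ := rho_le_add hσ hστ
    have hρτ := one_le_rho (hσ.trans hστ)
    nlinarith [mul_le_mul_of_nonneg_left hKb (zero_le_one.trans hρτ),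
      mul_le_mul_of_nonneg_right hρ (pairKernel_nonneg (sq_nonneg σ) hD₀.le),
      mul_le_mul_of_nonneg_left hKv (by nlinarith : 0 ≤ 4 / 5 * τ * (τ - σ))]
  have hfirst : (2 * σ - 1) * pairKernel (σ ^ 2 - σ) D ≤
      (2 * σ - 1) * ((1 + (τ - σ) * (τ + σ - 1) / D) * kc) := by
    have h := pairKernel_sub_pairKernel_le hu huc hD₀
    rw [hcu] at h
    exact mul_le_mul_of_nonneg_left (by linarith) (by linarith)
  have hbracket : (2 * σ - 1) * (τ + σ - 1) / D + 4 / 5 * τ * (1 + (τ ^ 2 - τ) / D) ≤ 2 := by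
    have h₁ := div_le_self (by nlinarith : 0 ≤ (2 * σ - 1) * (τ + σ - 1)) hD
    have h₂ := div_le_self (hu.trans huc) hD
    nlinarith
  have hsum : (2 * σ - 1) * ((1 + (τ - σ) * (τ + σ - 1) / D) * kc) +
      4 / 5 * τ * (τ - σ) * ((1 + (τ ^ 2 - τ) / D) * kc) ≤ (2 * τ - 1) * kc := by
    linear_combination (τ - σ) * kc * hbracket
  linarith

theorem Sig_101_eq (D : ℝ) :
    Sig 1.01 D = 1.02 * pairKernel 0.0101 D - rho 1.01 * pairKernel 1.0201 D := by
  norm_num [Sig]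

theorem Sig_101_antitoneOn : AntitoneOn (Sig 1.01) (Ici 1) := by
  intro D (hD : 1 ≤ D) D' _ hDD'
  have hρ := rho_le_two_mul_sub_one (by norm_num : (1 : ℝ) ≤ 1.01)
  have hb := pairKernel_antitone_right (by norm_num : (0 : ℝ) ≤ 1.0201) (by linarith) hDD'
  have hbc := pairKernel_sub_le_sub hD hDD'
  rw [Sig_101_eq, Sig_101_eq]
  nlinarith

theorem Sig_101_le (D : ℝ) (hD : 0 ≤ D) :
    Sig 1.01 D ≤ 1.02 * pairKernel 0.0101 D - 1.0080079364 * pairKernel 1.0201 D := by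
  have hρ : 1.0080079364 ≤ rho 1.01 := by
    rw [rho_eq_sqrt, Real.le_sqrt (by norm_num) (by norm_num)]
    norm_num
  rw [Sig_101_eq]
  nlinarith [pairKernel_nonneg (by norm_num : (0 : ℝ) ≤ 1.0201) hD]

/-- For `1 < σ ≤ 1.01`, `t ≥ 1` and `1 ≤ k ≤ 16`, `Σ_k(σ,t) ≤ 𝓑_{0.01}(k)`. -/
theorem Sigk_le_B001 (σ t : ℝ) (hσ : 1 < σ) (hσ' : σ ≤ 1.01) (ht : 1 ≤ t) :
    ∀ k : ℕ, 1 ≤ k → k ≤ 16 → Sigk k σ t ≤ B001 k := by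
  intro k hk hk16
  have hk2 : (1 : ℝ) ≤ (k : ℝ) ^ 2 := one_le_pow₀ (by exact_mod_cast hk)
  have hkt : (k : ℝ) ^ 2 ≤ (k : ℝ) ^ 2 * t ^ 2 :=
    le_mul_of_one_le_right (by positivity) (one_le_pow₀ ht)
  calc Sigk k σ t = Sig σ ((k : ℝ) ^ 2 * t ^ 2) := Sigk_eq_Sig k σ t (by linarith)
    _ ≤ Sig 1.01 ((k : ℝ) ^ 2 * t ^ 2) :=
      Sig_monotoneOn (hk2.trans hkt) ⟨hσ.le, hσ'⟩ ⟨by norm_num, le_rfl⟩ hσ'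
    _ ≤ Sig 1.01 ((k : ℝ) ^ 2) := Sig_101_antitoneOn hk2 (hk2.trans hkt) hkt
    _ ≤ 1.02 * pairKernel 0.0101 ((k : ℝ) ^ 2) - 1.0080079364 * pairKernel 1.0201 ((k : ℝ) ^ 2) :=
      Sig_101_le _ (by positivity)
    _ ≤ B001 k := by interval_cases k <;> norm_num [B001, pairKernel]
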